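/- Let σ, ω be locally finite positive Borel measures on ℝⁿ, 0 ≤ α < n, 0 < δ, and suppose the offset Muckenhoupt constant A₂^α := sup over pairs of disjoint neighbouring cubes (Q,Q') of equal side length of (σ(Q)/|Q|^{1-α/n})(ω(Q')/|Q|^{1-α/n}) is finite. For k ∈ ℤ define the annular averaging operator A_α^k(fσ)(x) = |B(x,2^{-k})|^{α/n - 1} ∫_{B(x,2^{-k}) ∖ B(x,2^{-k-1})} |f| dσ. Then ‖A_α^k(fσ)‖_{L²(ω)} ≤ C √(A₂^α) ‖f‖_{L²(σ)} with C = C(n,α) independent of k. -/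

import Mathlib

open MeasureTheory
open scoped ENNReal

/-- The dyadic cube of generation `k` (side length `2^{-k}`) with lower corner `2^{-k} z`. -/
def dyadicCube (n : ℕ) (k : ℤ) (z : Fin n → ℤ) : Set (EuclideanSpace ℝ (Fin n)) :=
  {x | ∀ i, (z i : ℝ) * (2 : ℝ) ^ (-k) ≤ x i ∧ x i < ((z i : ℝ) + 1) * (2 : ℝ) ^ (-k)}

/-- The concentric triple `3Q` of the dyadic cube `Q = dyadicCube n k z`. -/
def tripleDyadicCube (n : ℕ) (k : ℤ) (z : Fin n → ℤ) : Set (EuclideanSpace ℝ (Fin n)) :=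
  {x | ∀ i, ((z i : ℝ) - 1) * (2 : ℝ) ^ (-k) ≤ x i ∧ x i < ((z i : ℝ) + 2) * (2 : ℝ) ^ (-k)}

/-- Two dyadic cubes of the same generation are *neighbours* if each is contained
in the punctured triple of the other. -/
def NeighbourCubes (n : ℕ) (k : ℤ) (z z' : Fin n → ℤ) : Prop :=
  dyadicCube n k z ⊆ tripleDyadicCube n k z' \ dyadicCube n k z' ∧
  dyadicCube n k z' ⊆ tripleDyadicCube n k z \ dyadicCube n k z

/-- The annular `α`-averaging operator
`A_α^k(fσ)(x) = |B(x,2^{-k})|^{α/n-1} ∫_{B(x,2^{-k}) ∖ B(x,2^{-k-1})} f dσ`. -/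
noncomputable def annularOp {n : ℕ} (σ : Measure (EuclideanSpace ℝ (Fin n))) (α : ℝ) (k : ℤ)
    (f : EuclideanSpace ℝ (Fin n) → ℝ≥0∞) (x : EuclideanSpace ℝ (Fin n)) : ℝ≥0∞ :=
  (volume (Metric.ball x ((2 : ℝ) ^ (-k)))) ^ (α / (n : ℝ) - 1) *
    ∫⁻ y in Metric.ball x ((2 : ℝ) ^ (-k)) \ Metric.ball x ((2 : ℝ) ^ (-k) / 2), f y ∂σ

/-!
Put `r = 2^{-k}` and let `r/2 ≤ |y - x| < r`. Take the coarsest generation `j ≥ k - 1` whose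
dyadic cubes separate `x` and `y`. Then `j ≤ k + n + 1`, because cubes of generation `k + n + 1`
have diameter `< r/2`. The cubes of generation `j` that contain `x` and `y` are adjacent. For
`j = k - 1` this holds because `|y - x|` is less than the side length. Otherwise `x` and `y` share
the parent cube. Hence `A_α^k(fσ)(x) ≤ |B(x,r)|^{α/n-1} ∑_j ∑_{Q' adjacent to Q_j(x)} ∫_{Q'} f dσ`.
This is a sum of `n + 3` terms, and the `j`-th term is constant on the cubes of generation `j`.
Apply Cauchy–Schwarz on each `Q'` and the `A₂` condition to each adjacent pair `(Q', Q)`. This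
bounds the squared `L²(ω)` norm of the `j`-th term by `9^n A (2^{-j})^{2(n-α)} ‖f‖²_{L²(σ)}`.
Since `2^{-j} ≤ 2r`, the factor `|B(x,r)|^{2(α/n-1)} (2^{-j})^{2(n-α)}` is bounded by a constant
that depends only on `n` and `α`.
-/

open Metric Finset Function Module

lemma ENNReal.sq_sum_le_card_mul_sum_sq {ι : Type*} (s : Finset ι) (a : ι → ℝ≥0∞) :
    (∑ i ∈ s, a i) ^ 2 ≤ #s * ∑ i ∈ s, a i ^ 2 := by
  simpa [ENNReal.rpow_two, show (2 : ℝ) - 1 = 1 by norm_num] using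
    ENNReal.rpow_sum_le_const_mul_sum_rpow s a (p := 2) one_le_two

lemma lintegral_sq_sum_le {α ι : Type*} [MeasurableSpace α] (μ : Measure α) (s : Finset ι)
    {g : ι → α → ℝ≥0∞} (hg : ∀ i ∈ s, Measurable (g i)) :
    ∫⁻ x, (∑ i ∈ s, g i x) ^ 2 ∂μ ≤ #s * ∑ i ∈ s, ∫⁻ x, g i x ^ 2 ∂μ := by
  calc ∫⁻ x, (∑ i ∈ s, g i x) ^ 2 ∂μ ≤ ∫⁻ x, #s * ∑ i ∈ s, g i x ^ 2 ∂μ :=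
        lintegral_mono fun x => ENNReal.sq_sum_le_card_mul_sum_sq s _
    _ = #s * ∑ i ∈ s, ∫⁻ x, g i x ^ 2 ∂μ := by
        rw [lintegral_const_mul _ (s.measurable_sum fun i hi => (hg i hi).pow_const 2),
          lintegral_finsetSum _ fun i hi => (hg i hi).pow_const 2]

lemma sq_setLIntegral_le_measure_mul {α : Type*} [MeasurableSpace α] (μ : Measure α)
    (s : Set α) {f : α → ℝ≥0∞} (hf : AEMeasurable f (μ.restrict s)) :
    (∫⁻ x in s, f x ∂μ) ^ 2 ≤ μ s * ∫⁻ x in s, f x ^ 2 ∂μ := by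
  have holder := ENNReal.lintegral_mul_le_Lp_mul_Lq (μ.restrict s) Real.HolderConjugate.two_two
    hf (aemeasurable_const (b := (1 : ℝ≥0∞)))
  simp only [Pi.mul_apply, mul_one, ENNReal.rpow_two, one_pow, lintegral_const, one_mul,
    Measure.restrict_apply_univ] at holder
  calc (∫⁻ x in s, f x ∂μ) ^ 2
      ≤ ((∫⁻ x in s, f x ^ 2 ∂μ) ^ (1 / 2 : ℝ) * μ s ^ (1 / 2 : ℝ)) ^ 2 := by gcongr
    _ = μ s * ∫⁻ x in s, f x ^ 2 ∂μ := by
        rw [mul_pow, ← ENNReal.rpow_two, ← ENNReal.rpow_two, ← ENNReal.rpow_mul,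
          ← ENNReal.rpow_mul]
        norm_num [mul_comm]

lemma lintegral_biUnion_finset_le {α ι : Type*} [MeasurableSpace α] (μ : Measure α)
    (s : Finset ι) (t : ι → Set α) (f : α → ℝ≥0∞) :
    ∫⁻ x in ⋃ i ∈ s, t i, f x ∂μ ≤ ∑ i ∈ s, ∫⁻ x in t i, f x ∂μ := by
  calc ∫⁻ x in ⋃ i ∈ s, t i, f x ∂μ
      ≤ ∫⁻ x, f x ∂Measure.sum fun i : (s : Set ι) => μ.restrict (t i) := by
        rw [← Finset.set_biUnion_coe]
        exact lintegral_mono' (Measure.restrict_biUnion_le s.countable_toSet) le_rfl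
    _ = ∑ i ∈ s, ∫⁻ x in t i, f x ∂μ := by
        rw [lintegral_sum_measure, Finset.tsum_subtype' s fun i => ∫⁻ x in t i, f x ∂μ]

lemma Int.abs_floor_sub_floor_le_one {R : Type*} [Ring R] [LinearOrder R]
    [IsStrictOrderedRing R] [FloorRing R] {a b : R} (h : |a - b| ≤ 1) : |⌊a⌋ - ⌊b⌋| ≤ 1 := by
  obtain ⟨hlow, hup⟩ := abs_le.1 h
  rw [abs_le]
  have hb := Int.floor_le_floor (neg_le_sub_iff_le_add.1 hlow)
  have ha := Int.floor_le_floor (sub_le_iff_le_add'.1 hup)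
  rw [Int.floor_add_one] at ha hb
  omega

section Dyadic

variable {n : ℕ}

noncomputable def dyadicIndex (j : ℤ) (x : EuclideanSpace ℝ (Fin n)) : Fin n → ℤ :=
  fun i => ⌊x i * 2 ^ j⌋

lemma mem_dyadicCube_iff {j : ℤ} {z : Fin n → ℤ} {x : EuclideanSpace ℝ (Fin n)} :
    x ∈ dyadicCube n j z ↔ dyadicIndex j x = z := by
  have h2 : (0 : ℝ) < 2 ^ j := by positivity
  simp only [dyadicCube, Set.mem_ofPred_eq, funext_iff, dyadicIndex, Int.floor_eq_iff, zpow_neg,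
    mul_inv_le_iff₀ h2, lt_mul_inv_iff₀ h2]

lemma mem_dyadicCube_dyadicIndex (j : ℤ) (x : EuclideanSpace ℝ (Fin n)) :
    x ∈ dyadicCube n j (dyadicIndex j x) :=
  mem_dyadicCube_iff.2 rfl

lemma measurable_dyadicIndex (j : ℤ) : Measurable (dyadicIndex (n := n) j) :=
  measurable_pi_lambda _ fun i => by unfold dyadicIndex; fun_prop

lemma measurableSet_dyadicCube (j : ℤ) (z : Fin n → ℤ) : MeasurableSet (dyadicCube n j z) := by
  convert measurable_dyadicIndex j (measurableSet_singleton z)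
  ext x
  exact mem_dyadicCube_iff

lemma pairwise_disjoint_dyadicCube (j : ℤ) : Pairwise (Disjoint on dyadicCube n j) :=
  fun _ _ hne => Set.disjoint_left.2 fun _ hx hx' =>
    hne ((mem_dyadicCube_iff.1 hx).symm.trans (mem_dyadicCube_iff.1 hx'))

lemma iUnion_dyadicCube (j : ℤ) : ⋃ z, dyadicCube n j z = Set.univ :=
  Set.eq_univ_of_forall fun x => Set.mem_iUnion.2 ⟨_, mem_dyadicCube_dyadicIndex j x⟩

lemma tsum_setLIntegral_dyadicCube (μ : Measure (EuclideanSpace ℝ (Fin n))) (j : ℤ)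
    (g : EuclideanSpace ℝ (Fin n) → ℝ≥0∞) :
    ∑' z, ∫⁻ x in dyadicCube n j z, g x ∂μ = ∫⁻ x, g x ∂μ := by
  rw [← lintegral_iUnion (measurableSet_dyadicCube j) (pairwise_disjoint_dyadicCube j),
    iUnion_dyadicCube, Measure.restrict_univ]

lemma lintegral_comp_dyadicIndex (μ : Measure (EuclideanSpace ℝ (Fin n))) (j : ℤ)
    (g : (Fin n → ℤ) → ℝ≥0∞) :
    ∫⁻ x, g (dyadicIndex j x) ∂μ = ∑' z, g z * μ (dyadicCube n j z) := by
  rw [← tsum_setLIntegral_dyadicCube μ j]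
  refine tsum_congr fun z => ?_
  rw [setLIntegral_congr_fun (measurableSet_dyadicCube j z)
    fun x hx => congrArg g (mem_dyadicCube_iff.1 hx), setLIntegral_const]

lemma dist_le_of_mem_dyadicCube {j : ℤ} {z : Fin n → ℤ} {x y : EuclideanSpace ℝ (Fin n)}
    (hx : x ∈ dyadicCube n j z) (hy : y ∈ dyadicCube n j z) :
    dist x y ≤ √n * 2 ^ (-j) := by
  have hcoord : ∀ i, dist (x i) (y i) ^ 2 ≤ (2 ^ (-j) : ℝ) ^ 2 := fun i => by
    have hxi := hx i
    have hyi := hy i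
    rw [sq_le_sq₀ dist_nonneg (by positivity), Real.dist_eq, abs_le]
    constructor <;> nlinarith
  rw [EuclideanSpace.dist_eq, ← Real.sqrt_sq (by positivity : (0 : ℝ) ≤ 2 ^ (-j)),
    ← Real.sqrt_mul (Nat.cast_nonneg n)]
  refine Real.sqrt_le_sqrt ?_
  simpa using Finset.sum_le_sum fun i (_ : i ∈ Finset.univ) => hcoord i

lemma dyadicIndex_ne_of_lt_dist {j : ℤ} {x y : EuclideanSpace ℝ (Fin n)}
    (h : √n * 2 ^ (-j) < dist x y) : dyadicIndex j x ≠ dyadicIndex j y := fun hxy =>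
  (dist_le_of_mem_dyadicCube (mem_dyadicCube_dyadicIndex j x)
    (hxy ▸ mem_dyadicCube_dyadicIndex j y)).not_gt h

lemma dyadicIndex_apply_eq_ediv_two (j : ℤ) (x : EuclideanSpace ℝ (Fin n)) (i : Fin n) :
    dyadicIndex j x i = dyadicIndex (j + 1) x i / 2 := by
  have h := Int.floor_div_natCast (x i * 2 ^ j * 2) 2
  push_cast at h
  rw [mul_div_cancel_right₀ _ two_ne_zero] at h
  rw [dyadicIndex, dyadicIndex, zpow_add_one₀ two_ne_zero, ← mul_assoc, h]

lemma abs_dyadicIndex_sub_le_one {j : ℤ} {x y : EuclideanSpace ℝ (Fin n)}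
    (h : dist x y ≤ 2 ^ (-j)) (i : Fin n) :
    |dyadicIndex j x i - dyadicIndex j y i| ≤ 1 := by
  have hcoord : |x i * 2 ^ j - y i * 2 ^ j| ≤ 1 := by
    rw [← sub_mul, abs_mul, abs_of_pos (by positivity : (0 : ℝ) < 2 ^ j), ← Real.dist_eq]
    calc dist (x i) (y i) * 2 ^ j ≤ 2 ^ (-j) * 2 ^ j := by
          gcongr; exact (PiLp.dist_apply_le x y i).trans h
      _ = 1 := by rw [← zpow_add₀ two_ne_zero, neg_add_cancel, zpow_zero]
  exact Int.abs_floor_sub_floor_le_one hcoord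

lemma abs_dyadicIndex_succ_sub_le_one {j : ℤ} {x y : EuclideanSpace ℝ (Fin n)}
    (h : dyadicIndex j x = dyadicIndex j y) (i : Fin n) :
    |dyadicIndex (j + 1) x i - dyadicIndex (j + 1) y i| ≤ 1 := by
  have hi := congrFun h i
  rw [dyadicIndex_apply_eq_ediv_two j x, dyadicIndex_apply_eq_ediv_two j y] at hi
  rw [abs_le]
  omega

end Dyadic

noncomputable def unitOffsets (n : ℕ) : Finset (Fin n → ℤ) :=
  (Fintype.piFinset fun _ => Icc (-1 : ℤ) 1).erase 0

section Neighbours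

variable {n : ℕ}

lemma mem_unitOffsets {d : Fin n → ℤ} : d ∈ unitOffsets n ↔ d ≠ 0 ∧ ∀ i, |d i| ≤ 1 := by
  simp [unitOffsets, abs_le]

lemma card_unitOffsets_le : #(unitOffsets n) ≤ 3 ^ n :=
  (card_erase_le).trans (by simp)

lemma dyadicCube_subset_tripleDyadicCube {j : ℤ} {z z' : Fin n → ℤ}
    (h : ∀ i, |z i - z' i| ≤ 1) : dyadicCube n j z ⊆ tripleDyadicCube n j z' := by
  intro x hx i
  obtain ⟨hlow, hup⟩ := abs_le.1 (h i)
  have hlow' : (z' i : ℝ) - 1 ≤ z i := by exact_mod_cast (by omega : z' i - 1 ≤ z i)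
  have hup' : (z i : ℝ) + 1 ≤ z' i + 2 := by exact_mod_cast (by omega : z i + 1 ≤ z' i + 2)
  have h2 : (0 : ℝ) ≤ 2 ^ (-j) := by positivity
  exact ⟨(mul_le_mul_of_nonneg_right hlow' h2).trans (hx i).1,
    (hx i).2.trans_le (mul_le_mul_of_nonneg_right hup' h2)⟩

lemma neighbourCubes_add_of_mem_unitOffsets {j : ℤ} {z d : Fin n → ℤ}
    (hd : d ∈ unitOffsets n) : NeighbourCubes n j (z + d) z := by
  obtain ⟨hd0, hd1⟩ := mem_unitOffsets.1 hd
  have hne : z + d ≠ z := by simpa using hd0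
  refine ⟨Set.subset_inter (dyadicCube_subset_tripleDyadicCube fun i => ?_)
      (pairwise_disjoint_dyadicCube j hne).subset_compl_right,
    Set.subset_inter (dyadicCube_subset_tripleDyadicCube fun i => ?_)
      (pairwise_disjoint_dyadicCube j hne.symm).subset_compl_right⟩
  · simpa using hd1 i
  · simpa using hd1 i

end Neighbours

section Annulus

variable {n : ℕ}

lemma exists_dyadicIndex_sub_mem_unitOffsets {k : ℤ} {x y : EuclideanSpace ℝ (Fin n)}
    (hlow : 2 ^ (-k) / 2 ≤ dist y x) (hup : dist y x < 2 ^ (-k)) :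
    ∃ j ∈ Icc (k - 1) (k + n + 1), dyadicIndex j y - dyadicIndex j x ∈ unitOffsets n := by
  classical
  have hfine : dyadicIndex (k - 1 + (n + 2 : ℕ)) y ≠ dyadicIndex (k - 1 + (n + 2 : ℕ)) x := by
    have hsqrt : √n < 2 ^ n := by
      rw [Real.sqrt_lt' (by positivity), ← pow_mul, pow_mul']
      exact_mod_cast Nat.lt_pow_self (by norm_num : 1 < 2 ^ 2)
    have hpow : (2 : ℝ) ^ (-(k - 1 + ((n + 2 : ℕ) : ℤ))) * (2 ^ n * 2) = 2 ^ (-k) := by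
      rw [← zpow_natCast, ← zpow_add_one₀ two_ne_zero, ← zpow_add₀ two_ne_zero]
      congr 1
      push_cast
      ring
    refine dyadicIndex_ne_of_lt_dist (hlow.trans_lt' ?_)
    calc √n * (2 : ℝ) ^ (-(k - 1 + ((n + 2 : ℕ) : ℤ)))
        < 2 ^ n * 2 ^ (-(k - 1 + ((n + 2 : ℕ) : ℤ))) := by gcongr
      _ = 2 ^ (-k) / 2 := by rw [eq_div_iff two_ne_zero, ← hpow]; ring
  have hP : ∃ m : ℕ, dyadicIndex (k - 1 + m) y ≠ dyadicIndex (k - 1 + m) x := ⟨_, hfine⟩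
  have hm_le := Nat.find_min' hP hfine
  refine ⟨k - 1 + Nat.find hP, mem_Icc.2 ⟨by omega, by omega⟩,
    mem_unitOffsets.2 ⟨sub_ne_zero.2 (Nat.find_spec hP), fun i => ?_⟩⟩
  rw [Pi.sub_apply]
  rcases hm : Nat.find hP with _ | m
  · refine abs_dyadicIndex_sub_le_one (hup.le.trans ?_) i
    exact zpow_le_zpow_right₀ one_le_two (by omega)
  · have heq : dyadicIndex (k - 1 + m) y = dyadicIndex (k - 1 + m) x :=
      not_not.1 (Nat.find_min hP (hm ▸ m.lt_succ_self))
    simpa [← add_assoc] using abs_dyadicIndex_succ_sub_le_one heq i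

lemma annulus_subset_biUnion_dyadicCube (k : ℤ) (x : EuclideanSpace ℝ (Fin n)) :
    ball x (2 ^ (-k)) \ ball x (2 ^ (-k) / 2) ⊆
      ⋃ j ∈ Icc (k - 1) (k + n + 1), ⋃ d ∈ unitOffsets n, dyadicCube n j (dyadicIndex j x + d) := by
  rintro y ⟨hy, hy'⟩
  obtain ⟨j, hj, hd⟩ := exists_dyadicIndex_sub_mem_unitOffsets (not_lt.1 hy') hy
  exact Set.mem_biUnion hj (Set.mem_biUnion hd (mem_dyadicCube_iff.2 (add_sub_cancel _ _).symm))

noncomputable def neighbourSum (μ : Measure (EuclideanSpace ℝ (Fin n)))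
    (f : EuclideanSpace ℝ (Fin n) → ℝ≥0∞) (j : ℤ) (z : Fin n → ℤ) : ℝ≥0∞ :=
  ∑ d ∈ unitOffsets n, ∫⁻ y in dyadicCube n j (z + d), f y ∂μ

lemma setLIntegral_annulus_le_sum_neighbourSum (μ : Measure (EuclideanSpace ℝ (Fin n)))
    (f : EuclideanSpace ℝ (Fin n) → ℝ≥0∞) (k : ℤ) (x : EuclideanSpace ℝ (Fin n)) :
    ∫⁻ y in ball x (2 ^ (-k)) \ ball x (2 ^ (-k) / 2), f y ∂μ ≤
      ∑ j ∈ Icc (k - 1) (k + n + 1), neighbourSum μ f j (dyadicIndex j x) :=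
  calc _ ≤ ∫⁻ y in ⋃ j ∈ Icc (k - 1) (k + n + 1), ⋃ d ∈ unitOffsets n,
          dyadicCube n j (dyadicIndex j x + d), f y ∂μ :=
        lintegral_mono_set (annulus_subset_biUnion_dyadicCube k x)
    _ ≤ ∑ j ∈ Icc (k - 1) (k + n + 1), ∫⁻ y in ⋃ d ∈ unitOffsets n,
          dyadicCube n j (dyadicIndex j x + d), f y ∂μ :=
        lintegral_biUnion_finset_le μ _ _ f
    _ ≤ _ := sum_le_sum fun _ _ => lintegral_biUnion_finset_le μ _ _ f

end Annulus

section Generation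

variable {n : ℕ}

lemma tsum_sum_setLIntegral_dyadicCube_add (μ : Measure (EuclideanSpace ℝ (Fin n))) (j : ℤ)
    (s : Finset (Fin n → ℤ)) (g : EuclideanSpace ℝ (Fin n) → ℝ≥0∞) :
    ∑' z, ∑ d ∈ s, ∫⁻ x in dyadicCube n j (z + d), g x ∂μ = #s * ∫⁻ x, g x ∂μ := by
  have hshift : ∀ d, ∑' z, ∫⁻ x in dyadicCube n j (z + d), g x ∂μ = ∫⁻ x, g x ∂μ := fun d =>
    ((Equiv.addRight d).tsum_eq fun z => ∫⁻ x in dyadicCube n j z, g x ∂μ).trans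
      (tsum_setLIntegral_dyadicCube μ j g)
  rw [Summable.tsum_finsetSum fun _ _ => ENNReal.summable, sum_congr rfl fun d _ => hshift d,
    sum_const, nsmul_eq_mul]

lemma lintegral_sq_neighbourSum_le (σ ω : Measure (EuclideanSpace ℝ (Fin n))) (j : ℤ)
    {f : EuclideanSpace ℝ (Fin n) → ℝ≥0∞} (hf : Measurable f) {R : ℝ≥0∞}
    (hR : ∀ z, ∀ d ∈ unitOffsets n, σ (dyadicCube n j (z + d)) * ω (dyadicCube n j z) ≤ R) :
    ∫⁻ x, neighbourSum σ f j (dyadicIndex j x) ^ 2 ∂ω ≤ 9 ^ n * R * ∫⁻ y, f y ^ 2 ∂σ := by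
  have hcube : ∀ z, ∀ d ∈ unitOffsets n,
      (∫⁻ y in dyadicCube n j (z + d), f y ∂σ) ^ 2 * ω (dyadicCube n j z) ≤
        R * ∫⁻ y in dyadicCube n j (z + d), f y ^ 2 ∂σ := fun z d hd =>
    calc _ ≤ σ (dyadicCube n j (z + d)) * (∫⁻ y in dyadicCube n j (z + d), f y ^ 2 ∂σ) *
          ω (dyadicCube n j z) := by
          gcongr; exact sq_setLIntegral_le_measure_mul σ _ hf.aemeasurable
      _ ≤ R * ∫⁻ y in dyadicCube n j (z + d), f y ^ 2 ∂σ := by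
          rw [mul_right_comm]; gcongr; exact hR z d hd
  have hcell : ∀ z, neighbourSum σ f j z ^ 2 * ω (dyadicCube n j z) ≤
      3 ^ n * R * ∑ d ∈ unitOffsets n, ∫⁻ y in dyadicCube n j (z + d), f y ^ 2 ∂σ := fun z =>
    calc _ ≤ (3 ^ n * ∑ d ∈ unitOffsets n, (∫⁻ y in dyadicCube n j (z + d), f y ∂σ) ^ 2) *
          ω (dyadicCube n j z) := by
          gcongr
          refine (ENNReal.sq_sum_le_card_mul_sum_sq _ _).trans ?_
          gcongr
          exact_mod_cast card_unitOffsets_le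
      _ = 3 ^ n * ∑ d ∈ unitOffsets n,
          (∫⁻ y in dyadicCube n j (z + d), f y ∂σ) ^ 2 * ω (dyadicCube n j z) := by
          rw [mul_assoc, sum_mul]
      _ ≤ 3 ^ n * ∑ d ∈ unitOffsets n, R * ∫⁻ y in dyadicCube n j (z + d), f y ^ 2 ∂σ := by
          gcongr 3 ^ n * ∑ d ∈ _, ?_ with d hd; exact hcube z d hd
      _ = _ := by rw [← mul_sum, mul_assoc]
  calc ∫⁻ x, neighbourSum σ f j (dyadicIndex j x) ^ 2 ∂ω
      = ∑' z, neighbourSum σ f j z ^ 2 * ω (dyadicCube n j z) :=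
        lintegral_comp_dyadicIndex ω j fun z => neighbourSum σ f j z ^ 2
    _ ≤ ∑' z, 3 ^ n * R * ∑ d ∈ unitOffsets n, ∫⁻ y in dyadicCube n j (z + d), f y ^ 2 ∂σ :=
        ENNReal.tsum_le_tsum hcell
    _ = 3 ^ n * R * (#(unitOffsets n) * ∫⁻ y, f y ^ 2 ∂σ) := by
        rw [ENNReal.tsum_mul_left, tsum_sum_setLIntegral_dyadicCube_add]
    _ ≤ 3 ^ n * R * (3 ^ n * ∫⁻ y, f y ^ 2 ∂σ) := by
        gcongr; exact_mod_cast card_unitOffsets_le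
    _ = 9 ^ n * R * ∫⁻ y, f y ^ 2 ∂σ := by
        rw [show (9 : ℝ≥0∞) ^ n = 3 ^ n * 3 ^ n by rw [← mul_pow]; norm_num]; ring

end Generation

section Scaling

variable {E : Type*} [NormedAddCommGroup E] [NormedSpace ℝ E] [MeasurableSpace E] [BorelSpace E]
  [FiniteDimensional ℝ E] (μ : Measure E) [μ.IsAddHaarMeasure]

lemma measure_ball_rpow_eq (hE : 0 < finrank ℝ E) (β : ℝ) (x : E) {r : ℝ} (hr : 0 < r) :
    μ (ball x r) ^ (β / finrank ℝ E - 1) =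
      ENNReal.ofReal (r ^ (β - finrank ℝ E)) * μ (ball 0 1) ^ (β / finrank ℝ E - 1) := by
  rw [Measure.addHaar_ball_of_pos μ x hr,
    ENNReal.mul_rpow_of_ne_zero (ENNReal.ofReal_pos.2 (by positivity)).ne'
      (measure_ball_pos μ 0 one_pos).ne',
    ENNReal.ofReal_rpow_of_pos (by positivity), ← Real.rpow_natCast, ← Real.rpow_mul hr.le]
  congr 3
  field_simp

lemma sq_measure_ball_rpow_mul_le (hE : 0 < finrank ℝ E) {β : ℝ} (hβ : β ≤ finrank ℝ E)
    (x : E) {r s : ℝ} (hr : 0 < r) (hs : 0 ≤ s) (hsr : s ≤ 2 * r) :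
    (μ (ball x r) ^ (β / finrank ℝ E - 1)) ^ 2 * ENNReal.ofReal (s ^ (2 * (finrank ℝ E - β))) ≤
      (μ (ball 0 1) ^ (β / finrank ℝ E - 1)) ^ 2 *
        ENNReal.ofReal (2 ^ (2 * (finrank ℝ E - β))) := by
  have hreal : (r ^ (β - finrank ℝ E)) ^ 2 * s ^ (2 * (finrank ℝ E - β)) ≤
      2 ^ (2 * (finrank ℝ E - β)) :=
    calc _ ≤ (r ^ (β - finrank ℝ E)) ^ 2 * (2 * r) ^ (2 * (finrank ℝ E - β)) := by
          gcongr
      _ = 2 ^ (2 * (finrank ℝ E - β)) := by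
          rw [Real.mul_rpow zero_le_two hr.le, ← Real.rpow_two, ← Real.rpow_mul hr.le,
            mul_left_comm, ← Real.rpow_add hr,
            show (β - finrank ℝ E) * 2 + 2 * (finrank ℝ E - β) = 0 by ring, Real.rpow_zero, mul_one]
  rw [measure_ball_rpow_eq μ hE β x hr, mul_pow, mul_right_comm, ← ENNReal.ofReal_pow
    (by positivity), ← ENNReal.ofReal_mul (by positivity), mul_comm]
  gcongr

end Scaling

lemma card_Icc_sub_one_add_add_one (k : ℤ) (n : ℕ) : #(Icc (k - 1) (k + n + 1)) = n + 3 := by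
  rw [Int.card_Icc, show k + n + 1 + 1 - (k - 1) = (n + 3 : ℕ) by push_cast; ring,
    Int.toNat_natCast]

noncomputable def annularWeightBound (n : ℕ) (α : ℝ) : ℝ≥0∞ :=
  (volume (ball (0 : EuclideanSpace ℝ (Fin n)) 1) ^ (α / n - 1)) ^ 2 *
    ENNReal.ofReal (2 ^ (2 * (n - α)))

lemma annularWeightBound_ne_top (n : ℕ) (α : ℝ) : annularWeightBound n α ≠ ⊤ :=
  ENNReal.mul_ne_top (ENNReal.pow_ne_top (ENNReal.rpow_ne_top_of_ne_zero
    (measure_ball_pos _ _ one_pos).ne' measure_ball_lt_top.ne)) ENNReal.ofReal_ne_top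

section Annular

variable {n : ℕ}

lemma sq_volume_ball_rpow_mul_le (hn : 0 < n) {α : ℝ} (hα : α ≤ n) {k j : ℤ} (hkj : k - 1 ≤ j) :
    (volume (ball (0 : EuclideanSpace ℝ (Fin n)) (2 ^ (-k))) ^ (α / n - 1)) ^ 2 *
      ENNReal.ofReal ((2 ^ (-(j : ℝ))) ^ (2 * (n - α))) ≤ annularWeightBound n α := by
  have hE : finrank ℝ (EuclideanSpace ℝ (Fin n)) = n := finrank_euclideanSpace_fin
  have hscale : 2 ^ (-(j : ℝ)) ≤ 2 * (2 : ℝ) ^ (-k) := by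
    rw [← Int.cast_neg, Real.rpow_intCast, ← zpow_one_add₀ two_ne_zero]
    exact zpow_le_zpow_right₀ one_le_two (by linarith)
  have h := sq_measure_ball_rpow_mul_le volume (β := α) (hE ▸ hn) (by rw [hE]; exact hα) 0
    (by positivity) (by positivity) hscale
  rwa [hE] at h

lemma lintegral_sq_annularOp_le (σ ω : Measure (EuclideanSpace ℝ (Fin n))) (α : ℝ) (k : ℤ)
    (f : EuclideanSpace ℝ (Fin n) → ℝ≥0∞) :
    ∫⁻ x, annularOp σ α k f x ^ 2 ∂ω ≤
      (n + 3) * ∑ j ∈ Icc (k - 1) (k + n + 1),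
        (volume (ball (0 : EuclideanSpace ℝ (Fin n)) (2 ^ (-k))) ^ (α / n - 1)) ^ 2 *
          ∫⁻ x, neighbourSum σ f j (dyadicIndex j x) ^ 2 ∂ω := by
  set c := volume (ball (0 : EuclideanSpace ℝ (Fin n)) (2 ^ (-k))) ^ (α / n - 1)
  set S : ℤ → EuclideanSpace ℝ (Fin n) → ℝ≥0∞ := fun j x => neighbourSum σ f j (dyadicIndex j x)
  have hS : ∀ j, Measurable (S j) := fun j =>
    (measurable_of_countable (neighbourSum σ f j)).comp (measurable_dyadicIndex j)
  calc ∫⁻ x, annularOp σ α k f x ^ 2 ∂ω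
      ≤ ∫⁻ x, c ^ 2 * (∑ j ∈ Icc (k - 1) (k + n + 1), S j x) ^ 2 ∂ω := by
        refine lintegral_mono fun x => ?_
        rw [← mul_pow, annularOp, Measure.addHaar_ball_center]
        gcongr
        exact setLIntegral_annulus_le_sum_neighbourSum σ f k x
    _ ≤ c ^ 2 * ((n + 3) * ∑ j ∈ Icc (k - 1) (k + n + 1), ∫⁻ x, S j x ^ 2 ∂ω) := by
        rw [lintegral_const_mul _ ((measurable_sum _ fun j _ => hS j).pow_const 2)]
        gcongr
        have h := lintegral_sq_sum_le ω (Icc (k - 1) (k + n + 1)) fun j _ => hS j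
        rwa [card_Icc_sub_one_add_add_one, Nat.cast_add, Nat.cast_ofNat] at h
    _ = _ := by rw [mul_left_comm, mul_sum]

lemma sq_volume_ball_rpow_mul_lintegral_sq_neighbourSum_le (hn : 0 < n) {α : ℝ} (hα : α ≤ n)
    {σ ω : Measure (EuclideanSpace ℝ (Fin n))} {A : ℝ≥0∞}
    (hA : ∀ (k : ℤ) (z z' : Fin n → ℤ), NeighbourCubes n k z z' →
      σ (dyadicCube n k z) * ω (dyadicCube n k z') ≤
        A * ENNReal.ofReal (((2 : ℝ) ^ (-(k : ℝ))) ^ (2 * ((n : ℝ) - α))))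
    {f : EuclideanSpace ℝ (Fin n) → ℝ≥0∞} (hf : Measurable f) {k j : ℤ} (hkj : k - 1 ≤ j) :
    (volume (ball (0 : EuclideanSpace ℝ (Fin n)) (2 ^ (-k))) ^ (α / n - 1)) ^ 2 *
        ∫⁻ x, neighbourSum σ f j (dyadicIndex j x) ^ 2 ∂ω ≤
      9 ^ n * annularWeightBound n α * A * ∫⁻ y, f y ^ 2 ∂σ := by
  set c := volume (ball (0 : EuclideanSpace ℝ (Fin n)) (2 ^ (-k))) ^ (α / n - 1)
  set R := ENNReal.ofReal ((2 ^ (-(j : ℝ))) ^ (2 * (n - α)))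
  calc c ^ 2 * ∫⁻ x, neighbourSum σ f j (dyadicIndex j x) ^ 2 ∂ω
      ≤ c ^ 2 * (9 ^ n * (A * R) * ∫⁻ y, f y ^ 2 ∂σ) := by
        gcongr
        exact lintegral_sq_neighbourSum_le σ ω j hf fun z d hd =>
          hA j _ _ (neighbourCubes_add_of_mem_unitOffsets hd)
    _ = 9 ^ n * (c ^ 2 * R) * A * ∫⁻ y, f y ^ 2 ∂σ := by ring
    _ ≤ 9 ^ n * annularWeightBound n α * A * ∫⁻ y, f y ^ 2 ∂σ := by
        gcongr; exact sq_volume_ball_rpow_mul_le hn hα hkj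

end Annular

theorem annular_operator_bound_general {n : ℕ} (hn : 0 < n) (α : ℝ) (hαn : α < n) :
    ∃ C : ℝ≥0∞, C ≠ ⊤ ∧
      ∀ (σ ω : Measure (EuclideanSpace ℝ (Fin n))),
        IsLocallyFiniteMeasure σ → IsLocallyFiniteMeasure ω →
        ∀ A : ℝ≥0∞,
          (∀ (k : ℤ) (z z' : Fin n → ℤ), NeighbourCubes n k z z' →
            σ (dyadicCube n k z) * ω (dyadicCube n k z') ≤
              A * ENNReal.ofReal (((2 : ℝ) ^ (-(k : ℝ))) ^ (2 * ((n : ℝ) - α)))) →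
          ∀ (k : ℤ) (f : EuclideanSpace ℝ (Fin n) → ℝ≥0∞), Measurable f →
            ∫⁻ x, (annularOp σ α k f x) ^ 2 ∂ω ≤ C * A * ∫⁻ y, (f y) ^ 2 ∂σ := by
  refine ⟨(n + 3) * (n + 3) * 9 ^ n * annularWeightBound n α,
    ENNReal.mul_ne_top (by finiteness) (annularWeightBound_ne_top n α), ?_⟩
  intro σ ω _ _ A hA k f hf
  calc ∫⁻ x, annularOp σ α k f x ^ 2 ∂ω
      ≤ (n + 3) * ∑ j ∈ Icc (k - 1) (k + n + 1),
          (volume (ball (0 : EuclideanSpace ℝ (Fin n)) (2 ^ (-k))) ^ (α / n - 1)) ^ 2 *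
            ∫⁻ x, neighbourSum σ f j (dyadicIndex j x) ^ 2 ∂ω :=
        lintegral_sq_annularOp_le σ ω α k f
    _ ≤ (n + 3) * ∑ _j ∈ Icc (k - 1) (k + n + 1),
          9 ^ n * annularWeightBound n α * A * ∫⁻ y, f y ^ 2 ∂σ := by
        gcongr _ * ∑ j ∈ _, ?_ with j hj
        exact sq_volume_ball_rpow_mul_lintegral_sq_neighbourSum_le hn hαn.le hA hf
          (mem_Icc.1 hj).1
    _ = (n + 3) * (n + 3) * 9 ^ n * annularWeightBound n α * A * ∫⁻ y, f y ^ 2 ∂σ := by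
        rw [sum_const, nsmul_eq_mul, card_Icc_sub_one_add_add_one]
        push_cast
        ring

/-- If the offset Muckenhoupt constant `A₂^α` of `(σ,ω)` is finite, then each
annular averaging operator `A_α^k` is bounded from `L²(σ)` to `L²(ω)` with norm
`≲ √(A₂^α)`, uniformly in `k`. -/
theorem annular_operator_bound {n : ℕ} (hn : 0 < n) (α : ℝ) (hα0 : 0 ≤ α) (hαn : α < n) :
    ∃ C : ℝ≥0∞, C ≠ ⊤ ∧
      ∀ (σ ω : Measure (EuclideanSpace ℝ (Fin n))),
        IsLocallyFiniteMeasure σ → IsLocallyFiniteMeasure ω →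
        ∀ A : ℝ≥0∞,
          (∀ (k : ℤ) (z z' : Fin n → ℤ), NeighbourCubes n k z z' →
            σ (dyadicCube n k z) * ω (dyadicCube n k z') ≤
              A * ENNReal.ofReal (((2 : ℝ) ^ (-(k : ℝ))) ^ (2 * ((n : ℝ) - α)))) →
          ∀ (k : ℤ) (f : EuclideanSpace ℝ (Fin n) → ℝ≥0∞), Measurable f →
            ∫⁻ x, (annularOp σ α k f x) ^ 2 ∂ω ≤ C * A * ∫⁻ y, (f y) ^ 2 ∂σ :=
  annular_operator_bound_general hn α hαn
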